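/- Let n ≥ 3. The numbers p_{n,i} satisfy the following recurrence with initial conditions p_{3,−1} = 1 and p_{3,0} = 1. If n is even: p_{n+1,−1} = p_{n,−1}; p_{n+1,i} = p_{n,i−1} + p_{n,i} for 0 ≤ i ≤ n/2 − 2; and p_{n+1, n/2 − 1} = p_{n, n/2 − 2}. If n is odd: p_{n+1,−1} = p_{n,−1}; and p_{n+1,i} = p_{n,i−1} + p_{n,i} for 0 ≤ i ≤ (n−3)/2. -/

import Mathlib

open Finset Polynomial

/-- `σ` is a permutation of `[n] = {1, …, n}` (viewed as a function `ℕ → ℕ`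
restricted to a bijection of `{1, …, n}` onto itself). -/
def IsPermOn (n : ℕ) (σ : ℕ → ℕ) : Prop :=
  Set.BijOn σ (Set.Icc 1 n) (Set.Icc 1 n)

/-- The circular peak set of `σ` (as a permutation of `[n]`):
`CP(σ) = {σ(i) : 2 ≤ i ≤ n−1, σ(i−1) < σ(i) > σ(i+1)}`. -/
def CP (n : ℕ) (σ : ℕ → ℕ) : Finset ℕ :=
  ((Finset.Icc 2 (n - 1)).filter (fun i => σ (i - 1) < σ i ∧ σ (i + 1) < σ i)).image σ

open scoped Classical in
/-- `Pn n` is the collection of all subsets `S ⊆ [n]` arising as the circular peak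
set of some permutation of `[n]`. -/
noncomputable def Pn (n : ℕ) : Finset (Finset ℕ) :=
  (Finset.Icc 1 n).powerset.filter (fun S => ∃ σ : ℕ → ℕ, IsPermOn n σ ∧ CP n σ = S)

/-- `pcount n k` is the number of members of `Pn n` of cardinality `k`;
in the paper's notation, `p_{n,i} = pcount n (i+1)`. -/
noncomputable def pcount (n k : ℕ) : ℕ :=
  ((Pn n).filter (fun S => S.card = k)).card

/-- The f-polynomial `P_n(x) = Σ_{i=0}^{⌊(n−1)/2⌋} p_{n,i−1} x^{⌊(n−1)/2⌋−i}`. -/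
noncomputable def fpoly (n : ℕ) : Polynomial ℚ :=
  ∑ i ∈ Finset.range ((n - 1) / 2 + 1),
    Polynomial.C (pcount n i : ℚ) * Polynomial.X ^ ((n - 1) / 2 - i)

/-!
A set `S ⊆ [n]` is a peak set iff it is *admissible*: every `x ∈ S` exceeds twice the number of
elements of `S` up to `x`. Necessity: the `t` peaks with value `≤ x` sit at pairwise non-adjacent
interior positions, so together with their neighbours they fill at least `2t + 1` positions, all
carrying values `≤ x`. Sufficiency: listing `S` as `e₀ < e₁ < ⋯ < e_{k-1}` and its complement in
`[n]` as `f₀ < f₁ < ⋯`, the permutation `f₀ e₀ f₁ e₁ ⋯ e_{k-1} f_k f_{k+1} ⋯` has peak set exactly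
`S`, because admissibility forces `f_{j+1} < e_j`. Splitting the admissible subsets of `[n+1]`
according to whether they contain `n + 1` then gives `p_{n+1,i} = p_{n,i-1} + p_{n,i}`, and the
second summand vanishes once `n ≤ 2 (i + 1)`.
-/

def IsAdmissible (S : Finset ℕ) : Prop :=
  ∀ x ∈ S, 2 * #{y ∈ S | y ≤ x} < x

instance : DecidablePred IsAdmissible := fun S => by
  unfold IsAdmissible; infer_instance

namespace Finset

variable {S : Finset ℕ} {i j x : ℕ}

lemma nth_mem_of_lt_card (hj : j < #S) : Nat.nth (· ∈ S) j ∈ S :=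
  Nat.nth_mem_of_lt_card S.finite_toSet (by rwa [finite_toSet_toFinset])

lemma count_nth_of_lt_card (hj : j < #S) : Nat.count (· ∈ S) (Nat.nth (· ∈ S) j) = j :=
  Nat.count_nth_of_lt_card_finite S.finite_toSet (by rwa [finite_toSet_toFinset])

lemma nth_lt_nth_of_lt_card (hij : i < j) (hj : j < #S) :
    Nat.nth (· ∈ S) i < Nat.nth (· ∈ S) j :=
  Nat.nth_lt_nth_of_lt_card S.finite_toSet hij (by rwa [finite_toSet_toFinset])

lemma count_lt_card_of_mem (hx : x ∈ S) : Nat.count (· ∈ S) x < #S := by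
  simpa using Nat.count_lt_card S.finite_toSet hx

lemma image_nth_range_card (S : Finset ℕ) : (range #S).image (Nat.nth (· ∈ S)) = S := by
  apply coe_injective
  rw [coe_image, coe_range]
  have := Nat.image_nth_Iio_card S.finite_toSet
  rwa [finite_toSet_toFinset] at this

lemma card_filter_lt_eq_count (S : Finset ℕ) (x : ℕ) : #{y ∈ S | y < x} = Nat.count (· ∈ S) x := by
  rw [Nat.count_eq_card_filter_range]
  congr 1
  ext y
  simp [and_comm]

lemma card_filter_le_nth (hj : j < #S) : #{y ∈ S | y ≤ Nat.nth (· ∈ S) j} = j + 1 := by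
  simp_rw [← Nat.lt_succ_iff]
  rw [card_filter_lt_eq_count, Nat.count_succ, count_nth_of_lt_card hj,
    if_pos (nth_mem_of_lt_card hj)]

lemma count_sdiff_add_count {n : ℕ} (hS : S ⊆ Icc 1 n) (hx : x ≤ n + 1) :
    Nat.count (· ∈ Icc 1 n \ S) x + Nat.count (· ∈ S) x = x - 1 := by
  have hsub : {y ∈ S | y < x} ⊆ Ico 1 x := fun y hy => by grind
  have hcompl : {y ∈ Icc 1 n \ S | y < x} = Ico 1 x \ {y ∈ S | y < x} := by
    ext y
    grind
  rw [← card_filter_lt_eq_count, ← card_filter_lt_eq_count, hcompl,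
    card_sdiff_add_card_eq_card hsub, Nat.card_Ico]

lemma two_mul_card_lt_card_union_image_succ_pred {T : Finset ℕ} (hT : T.Nonempty) (h0 : 0 ∉ T)
    (hsep : ∀ a ∈ T, a + 1 ∉ T) : 2 * #T < #(T ∪ (T.image (· + 1) ∪ T.image (· - 1))) := by
  have hdisj : Disjoint T (T.image (· + 1) ∪ T.image (· - 1)) := by
    simp only [disjoint_left, mem_union, mem_image, not_or, not_exists, not_and]
    refine fun a ha => ⟨fun b hb hba => hsep b hb (hba ▸ ha), fun b hb hba => ?_⟩
    have hb0 : b ≠ 0 := fun h => h0 (h ▸ hb)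
    exact hsep a ha (by rwa [← hba, Nat.sub_add_cancel (Nat.one_le_iff_ne_zero.2 hb0)])
  set m := T.min' hT
  have hm : m - 1 ∉ T.image (· + 1) := by
    simp only [mem_image, not_exists, not_and]
    intro b hb hbm
    have := T.min'_le b hb
    omega
  have hsub : insert (m - 1) (T.image (· + 1)) ⊆ T.image (· + 1) ∪ T.image (· - 1) :=
    insert_subset (mem_union_right _ (mem_image_of_mem _ (T.min'_mem hT))) subset_union_left
  have := card_le_card hsub
  rw [card_insert_of_notMem hm, card_image_of_injective _ (add_left_injective 1)] at this
  rw [card_union_of_disjoint hdisj]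
  omega

lemma card_filter_powerset_insert {α : Type*} [DecidableEq α] {s : Finset α} {a : α} 
    (ha : a ∉ s) (p : Finset α → Prop) [DecidablePred p] :
    #{t ∈ (insert a s).powerset | p t} =
      #{t ∈ s.powerset | p t} + #{t ∈ s.powerset | p (insert a t)} := by
  simp only [card_filter]
  exact sum_powerset_insert ha _

end Finset

lemma IsAdmissible.two_mul_add_two_lt_nth {S : Finset ℕ} (hS : IsAdmissible S) {j : ℕ}
    (hj : j < #S) : 2 * j + 2 < Nat.nth (· ∈ S) j := by
  have := hS _ (nth_mem_of_lt_card hj)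
  rwa [card_filter_le_nth hj] at this

lemma isAdmissible_insert_iff {S : Finset ℕ} {a : ℕ} (hS : ∀ y ∈ S, y < a) :
    IsAdmissible (insert a S) ↔ IsAdmissible S ∧ 2 * (#S + 1) < a := by
  have hnot : a ∉ S := fun ha => (hS a ha).false
  have hbelow : ∀ x ∈ S, {y ∈ insert a S | y ≤ x} = {y ∈ S | y ≤ x} := fun x hx => by
    rw [filter_insert, if_neg (by have := hS x hx; omega)]
  have htop : {y ∈ insert a S | y ≤ a} = insert a S :=
    filter_true_of_mem fun y hy => by
      rcases mem_insert.1 hy with rfl | hy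
      exacts [le_rfl, (hS y hy).le]
  simp only [IsAdmissible, forall_mem_insert, htop, card_insert_of_notMem hnot]
  constructor
  · rintro ⟨ha, hrest⟩
    exact ⟨fun x hx => hbelow x hx ▸ hrest x hx, ha⟩
  · rintro ⟨hrest, ha⟩
    exact ⟨ha, fun x hx => (hbelow x hx).symm ▸ hrest x hx⟩

def peakPositions (n : ℕ) (σ : ℕ → ℕ) : Finset ℕ :=
  {i ∈ Icc 2 (n - 1) | σ (i - 1) < σ i ∧ σ (i + 1) < σ i}

lemma CP_eq_image_peakPositions (n : ℕ) (σ : ℕ → ℕ) : CP n σ = (peakPositions n σ).image σ :=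
  rfl

lemma isAdmissible_CP {n : ℕ} {σ : ℕ → ℕ} (hσ : IsPermOn n σ) : IsAdmissible (CP n σ) := by
  intro x hx
  obtain ⟨p, hp, rfl⟩ := mem_image.1 hx
  set T := {i ∈ peakPositions n σ | σ i ≤ σ p}
  have hT : ∀ i ∈ T, (2 ≤ i ∧ i ≤ n - 1) ∧ (σ (i - 1) < σ i ∧ σ (i + 1) < σ i) ∧ σ i ≤ σ p :=
    fun i hi => by simpa [T, peakPositions, and_assoc] using hi
  have hTn : ∀ i ∈ T, i ∈ Set.Icc 1 n := fun i hi => by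
    have := hT i hi; exact ⟨by omega, by omega⟩
  have hcard : #{y ∈ CP n σ | y ≤ σ p} = #T := by
    rw [CP_eq_image_peakPositions, filter_image,
      card_image_of_injOn (hσ.injOn.mono fun i hi => hTn i hi)]
  set U := T ∪ (T.image (· + 1) ∪ T.image (· - 1))
  have hU : ∀ u ∈ U, u ∈ Set.Icc 1 n ∧ σ u ≤ σ p := by
    simp only [U, mem_union, mem_image]
    rintro u (hu | ⟨i, hi, rfl⟩ | ⟨i, hi, rfl⟩)
    · exact ⟨hTn u hu, (hT u hu).2.2⟩
    all_goals
      obtain ⟨hi_pos, hi_peak, hi_le⟩ := hT i hi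
      exact ⟨⟨by omega, by omega⟩, by omega⟩
  have hUx : #U ≤ σ p := by
    have hmaps : Set.MapsTo σ U (Icc 1 (σ p)) := fun u hu => by
      have := hσ.mapsTo (hU u hu).1
      simp only [Set.mem_Icc, coe_Icc] at this ⊢
      exact ⟨this.1, (hU u hu).2⟩
    simpa using card_le_card_of_injOn σ hmaps (hσ.injOn.mono fun u hu => (hU u hu).1)
  have hsep : ∀ a ∈ T, a + 1 ∉ T := fun a ha ha' => by
    have := (hT a ha).2.1.2
    have := (hT (a + 1) ha').2.1.1
    simp only [Nat.add_sub_cancel] at this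
    omega
  have hpT : p ∈ T := mem_filter.2 ⟨hp, le_rfl⟩
  have : 2 * #T < #U := two_mul_card_lt_card_union_image_succ_pred ⟨p, hpT⟩
    (fun h0 => by have := (hT 0 h0).1; omega) hsep
  omega

/-- `f 0, e 0, f 1, e 1, …, e (k - 1), f k, f (k + 1), …` at positions `1, 2, 3, …`. -/
def interleave (k : ℕ) (e f : ℕ → ℕ) (i : ℕ) : ℕ :=
  if i ≤ 2 * k + 1 then (if Even i then e (i / 2 - 1) else f (i / 2)) else f (i - (k + 1))

section Interleave

variable {k n i j : ℕ} {e f : ℕ → ℕ}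

lemma interleave_two_mul_add_two (hj : j < k) : interleave k e f (2 * j + 2) = e j := by
  rw [interleave, if_pos (by omega), if_pos ⟨j + 1, by ring⟩]
  congr 1
  omega

lemma interleave_two_mul_add_one (hj : j ≤ k) : interleave k e f (2 * j + 1) = f j := by
  rw [interleave, if_pos (by omega), if_neg (Nat.not_even_iff_odd.2 (odd_two_mul_add_one j))]
  congr 1
  omega

lemma interleave_of_lt (hi : 2 * k + 1 < i) : interleave k e f i = f (i - (k + 1)) :=
  if_neg (by omega)

lemma interleave_position_cases (k : ℕ) (hi : 1 ≤ i) :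
    (∃ j < k, i = 2 * j + 2) ∨ (∃ j ≤ k, i = 2 * j + 1) ∨ 2 * k + 1 < i := by
  obtain ⟨j, rfl | rfl⟩ := Nat.even_or_odd' i
  · by_cases h : 2 * j ≤ 2 * k + 1
    · exact Or.inl ⟨j - 1, by omega, by omega⟩
    · exact Or.inr (Or.inr (by omega))
  · by_cases h : j ≤ k
    · exact Or.inr (Or.inl ⟨j, h, rfl⟩)
    · exact Or.inr (Or.inr (by omega))

-- Each `f` at an interior position has a larger neighbour: the `e` before it, or, in the
-- increasing tail, the `f` after it.
lemma peakPositions_interleave (hf : StrictMonoOn f (Set.Iio (n - k)))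
    (hef : ∀ j < k, f (j + 1) < e j) (hk : ∀ j < k, 2 * j + 2 < n) :
    peakPositions n (interleave k e f) = (range k).image (2 * · + 2) := by
  have hff : ∀ j, j + 1 < n - k → f j < f (j + 1) := fun j hj =>
    hf (Set.mem_Iio.2 (by omega)) (Set.mem_Iio.2 hj) (by omega)
  ext i
  simp only [peakPositions, mem_filter, mem_Icc, mem_image, mem_range]
  constructor
  · rintro ⟨⟨hi2, hin⟩, hleft, hright⟩
    rcases interleave_position_cases k (i := i) (by omega) with ⟨j, hj, rfl⟩ | ⟨j, hj, rfl⟩ | hi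
    · exact ⟨j, hj, rfl⟩
    · obtain ⟨j, rfl⟩ : ∃ j', j = j' + 1 := ⟨j - 1, by omega⟩
      rw [show 2 * (j + 1) + 1 - 1 = 2 * j + 2 by omega, interleave_two_mul_add_two (by omega),
        interleave_two_mul_add_one hj] at hleft
      exact (lt_asymm hleft (hef j (by omega))).elim
    · rw [interleave_of_lt hi, interleave_of_lt (by omega),
        show i + 1 - (k + 1) = i - (k + 1) + 1 by omega] at hright
      exact (lt_asymm hright (hff _ (by omega))).elim
  · rintro ⟨j, hj, rfl⟩
    have := hk j hj
    have := hk (k - 1) (by omega)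
    rw [show 2 * j + 2 - 1 = 2 * j + 1 by omega, show 2 * j + 2 + 1 = 2 * (j + 1) + 1 by omega,
      interleave_two_mul_add_two hj, interleave_two_mul_add_one (by omega),
      interleave_two_mul_add_one (by omega)]
    exact ⟨⟨by omega, by omega⟩, (hff j (by omega)).trans (hef j hj), hef j hj⟩

lemma CP_interleave (hf : StrictMonoOn f (Set.Iio (n - k)))
    (hef : ∀ j < k, f (j + 1) < e j) (hk : ∀ j < k, 2 * j + 2 < n) :
    CP n (interleave k e f) = (range k).image e := by
  rw [CP_eq_image_peakPositions, peakPositions_interleave hf hef hk, image_image]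
  exact image_congr fun j hj => interleave_two_mul_add_two (mem_range.1 hj)

end Interleave

section Construction

variable {n : ℕ} {S : Finset ℕ}

lemma IsAdmissible.two_mul_add_two_lt (hadm : IsAdmissible S) (hS : S ⊆ Icc 1 n) {j : ℕ}
    (hj : j < #S) : 2 * j + 2 < n :=
  (hadm.two_mul_add_two_lt_nth hj).trans_le (mem_Icc.1 (hS (nth_mem_of_lt_card hj))).2

lemma IsAdmissible.two_mul_card_lt (hadm : IsAdmissible S) (hS : S ⊆ Icc 1 n)
    (hne : S.Nonempty) : 2 * #S < n := by
  have := hadm.two_mul_add_two_lt hS (j := #S - 1) (by have := hne.card_pos; omega)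
  omega

lemma nth_sdiff_succ_lt_nth (hS : S ⊆ Icc 1 n) (hadm : IsAdmissible S) {j : ℕ} (hj : j < #S) :
    Nat.nth (· ∈ Icc 1 n \ S) (j + 1) < Nat.nth (· ∈ S) j := by
  have hlt := hadm.two_mul_add_two_lt_nth hj
  have hn : Nat.nth (· ∈ S) j ≤ n := (mem_Icc.1 (hS (nth_mem_of_lt_card hj))).2
  have := count_sdiff_add_count hS (x := Nat.nth (· ∈ S) j) (by omega)
  rw [count_nth_of_lt_card hj] at this
  exact Nat.nth_lt_of_lt_count (by omega)

lemma card_Icc_sdiff (hS : S ⊆ Icc 1 n) : #(Icc 1 n \ S) = n - #S := by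
  rw [card_sdiff_of_subset hS, Nat.card_Icc, Nat.add_sub_cancel]

lemma isPermOn_interleave_nth (hS : S ⊆ Icc 1 n) (hadm : IsAdmissible S) :
    IsPermOn n (interleave #S (Nat.nth (· ∈ S)) (Nat.nth (· ∈ Icc 1 n \ S))) := by
  set T := Icc 1 n \ S
  have hT := card_Icc_sdiff hS
  have hTn : ∀ {j}, j < n - #S → Nat.nth (· ∈ T) j ∈ Icc 1 n := fun hj =>
    sdiff_subset (nth_mem_of_lt_card (hT ▸ hj))
  have hkn : #S = 0 ∨ 2 * #S < n := S.eq_empty_or_nonempty.imp card_eq_zero.2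
    (hadm.two_mul_card_lt hS)
  have hmaps : Set.MapsTo (interleave #S (Nat.nth (· ∈ S)) (Nat.nth (· ∈ T)))
      (Set.Icc 1 n) (Set.Icc 1 n) := by
    rintro i ⟨hi1, hin⟩
    rw [← coe_Icc, mem_coe]
    rcases interleave_position_cases #S hi1 with ⟨j, hj, rfl⟩ | ⟨j, hj, rfl⟩ | hi
    · rw [interleave_two_mul_add_two hj]; exact hS (nth_mem_of_lt_card hj)
    · rw [interleave_two_mul_add_one hj]; exact hTn (by omega)
    · rw [interleave_of_lt hi]; exact hTn (by omega)
  refine (Set.finite_Icc 1 n).surjOn_iff_bijOn_of_mapsTo hmaps |>.1 ?_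
  rintro y hy
  rw [Set.mem_Icc, ← mem_Icc] at hy
  by_cases hyS : y ∈ S
  · have hj := count_lt_card_of_mem hyS
    refine ⟨2 * Nat.count (· ∈ S) y + 2, ⟨by omega, (hadm.two_mul_add_two_lt hS hj).le⟩, ?_⟩
    rw [interleave_two_mul_add_two hj, Nat.nth_count hyS]
  · have hyT : y ∈ T := mem_sdiff.2 ⟨hy, hyS⟩
    have hj := count_lt_card_of_mem hyT
    rw [hT] at hj
    by_cases hjk : Nat.count (· ∈ T) y ≤ #S
    · refine ⟨2 * Nat.count (· ∈ T) y + 1, ⟨by omega, by omega⟩, ?_⟩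
      rw [interleave_two_mul_add_one hjk, Nat.nth_count hyT]
    · refine ⟨Nat.count (· ∈ T) y + #S + 1, ⟨by omega, by omega⟩, ?_⟩
      rw [interleave_of_lt (by omega), Nat.add_sub_add_right, Nat.add_sub_cancel,
        Nat.nth_count hyT]

lemma CP_interleave_nth (hS : S ⊆ Icc 1 n) (hadm : IsAdmissible S) :
    CP n (interleave #S (Nat.nth (· ∈ S)) (Nat.nth (· ∈ Icc 1 n \ S))) = S := by
  have hmono : StrictMonoOn (Nat.nth (· ∈ Icc 1 n \ S)) (Set.Iio (n - #S)) :=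
    fun i _ j hj hij => nth_lt_nth_of_lt_card hij (card_Icc_sdiff hS ▸ hj)
  rw [CP_interleave hmono (fun j => nth_sdiff_succ_lt_nth hS hadm)
    (fun j => hadm.two_mul_add_two_lt hS), image_nth_range_card]

end Construction

lemma mem_Pn_iff {n : ℕ} {S : Finset ℕ} : S ∈ Pn n ↔ S ⊆ Icc 1 n ∧ IsAdmissible S := by
  simp only [Pn, mem_filter, mem_powerset]
  constructor
  · rintro ⟨hS, σ, hσ, rfl⟩
    exact ⟨hS, isAdmissible_CP hσ⟩
  · rintro ⟨hS, hadm⟩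
    exact ⟨hS, _, isPermOn_interleave_nth hS hadm, CP_interleave_nth hS hadm⟩

lemma pcount_eq_card (n k : ℕ) :
    pcount n k = #{S ∈ (Icc 1 n).powerset | IsAdmissible S ∧ #S = k} := by
  rw [pcount]
  congr 1
  ext S
  simp only [mem_filter, mem_Pn_iff, mem_powerset, and_assoc]

lemma pcount_zero (n : ℕ) : pcount n 0 = 1 := by
  rw [pcount_eq_card, card_eq_one]
  refine ⟨∅, ?_⟩
  ext S
  simp only [mem_filter, mem_powerset, card_eq_zero, mem_singleton]
  constructor
  · exact fun h => h.2.2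
  · rintro rfl
    exact ⟨empty_subset _, fun x hx => absurd hx (notMem_empty x), rfl⟩

lemma pcount_eq_zero {n k : ℕ} (hk : 1 ≤ k) (hn : n ≤ 2 * k) : pcount n k = 0 := by
  rw [pcount_eq_card, card_eq_zero, filter_eq_empty_iff]
  rintro S hS ⟨hadm, rfl⟩
  have := hadm.two_mul_card_lt (mem_powerset.1 hS) (card_pos.1 hk)
  omega

lemma pcount_succ_succ {n k : ℕ} (h : 2 * k + 2 ≤ n) :
    pcount (n + 1) (k + 1) = pcount n k + pcount n (k + 1) := by
  rw [pcount_eq_card, pcount_eq_card, pcount_eq_card, ← insert_Icc_right_eq_Icc_add_one (by omega),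
    card_filter_powerset_insert (by simp), add_comm]
  refine congrArg (· + _) (congrArg card (filter_congr fun t ht => ?_))
  have hlt : ∀ y ∈ t, y < n + 1 := fun y hy =>
    Nat.lt_succ_of_le (mem_Icc.1 (mem_powerset.1 ht hy)).2
  rw [isAdmissible_insert_iff hlt, card_insert_of_notMem fun hn => (hlt _ hn).false]
  constructor
  · rintro ⟨⟨hadm, -⟩, hcard⟩
    exact ⟨hadm, by omega⟩
  · rintro ⟨hadm, rfl⟩
    exact ⟨⟨hadm, by omega⟩, rfl⟩

/-- Corollary 3.3: recurrences for the numbers `p_{n,i}` (here `p_{n,i} = pcount n (i+1)`),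
with initial conditions `p_{3,−1} = p_{3,0} = 1`. -/
theorem pcount_recurrence (n : ℕ) (hn : 3 ≤ n) :
    pcount 3 0 = 1 ∧ pcount 3 1 = 1 ∧
    (Even n →
      pcount (n + 1) 0 = pcount n 0 ∧
      (∀ i : ℕ, i + 2 ≤ n / 2 → pcount (n + 1) (i + 1) = pcount n i + pcount n (i + 1)) ∧
      pcount (n + 1) (n / 2) = pcount n (n / 2 - 1)) ∧
    (Odd n →
      pcount (n + 1) 0 = pcount n 0 ∧
      ∀ i : ℕ, i ≤ (n - 3) / 2 →
        pcount (n + 1) (i + 1) = pcount n i + pcount n (i + 1)) := by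
  have hzero : pcount (n + 1) 0 = pcount n 0 := by rw [pcount_zero, pcount_zero]
  refine ⟨pcount_zero 3, ?_, fun ⟨t, ht⟩ => ⟨hzero, fun i hi => pcount_succ_succ (by omega), ?_⟩,
    fun ⟨t, ht⟩ => ⟨hzero, fun i hi => pcount_succ_succ (by omega)⟩⟩
  · rw [pcount_succ_succ (n := 2) (k := 0) le_rfl, pcount_zero, pcount_eq_zero le_rfl le_rfl]
  · obtain ⟨s, rfl⟩ : ∃ s, t = s + 1 := ⟨t - 1, by omega⟩
    rw [show n / 2 = s + 1 by omega, Nat.add_sub_cancel, pcount_succ_succ (by omega),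
      pcount_eq_zero (n := n) (k := s + 1) (by omega) (by omega), add_zero]
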